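/- The Automath book B_Δ obtained by translating a λD-environment Δ is clean: no assumption line of B_Δ is a dead-end. -/

import Mathlib

/-!
In `B_Δ` every assumption line is immediately followed by a line that it indicates: inside a
cluster, the line of `xₖ` is followed by the line of `xₖ₊₁` (indicator `xₖ`), and the line of
the last variable by the definition or primitive line of the cluster. This property survives
concatenation of books, so it passes from the clusters to `B_Δ`, and it rules out dead-ends.
-/

/-- Content of an Automath line: `---`, `PN`, or a term (abstractly a natural number). -/
inductive Content where
  | dash : Content
  | pn : Content
  | term : ℕ → Content
deriving DecidableEq

/-- An Automath line: indicator (`none` = ε), identifier, content, category. -/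
structure Line where
  indicator : Option ℕ
  identifier : ℕ
  content : Content
  category : ℕ
deriving DecidableEq

abbrev Book := List Line

def Line.isAssum (l : Line) : Bool := l.content == Content.dash
def Line.isPrim (l : Line) : Bool := l.content == Content.pn
def Line.isDefin (l : Line) : Bool := match l.content with | .term _ => true | _ => false

/-- Coherence: identifiers pairwise distinct, and each non-ε indicator is the
identifier of an earlier assumption line. -/
def Coherent (B : Book) : Prop :=
  (B.map Line.identifier).Nodup ∧
  ∀ m : ℕ, ∀ L : Line, B[m]? = some L → ∀ y : ℕ, L.indicator = some y →
    ∃ l : ℕ, l < m ∧ ∃ L' : Line, B[l]? = some L' ∧ L'.identifier = y ∧ L'.isAssum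

/-- Index of the assumption line introducing identifier `y`. -/
def introIdx (B : Book) (y : ℕ) : Option ℕ :=
  B.findIdx? (fun l => l.identifier == y && l.isAssum)

/-- Fuel-based computation of the subject-list γ of the line at index `i`. -/
def gammaAux (B : Book) : ℕ → ℕ → List ℕ
  | 0, i =>
    match B[i]? with
    | none => []
    | some l => [l.identifier]
  | fuel+1, i =>
    match B[i]? with
    | none => []
    | some l =>
      match l.indicator with
      | none => [l.identifier]
      | some y =>
        match introIdx B y with
        | none => [l.identifier]
        | some j => gammaAux B fuel j ++ [l.identifier]

/-- Subject-list γ_z of variable `z` (introduced by an assumption line). γ_ε = []. -/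
def gammaOf (B : Book) (z : ℕ) : List ℕ :=
  match introIdx B z with
  | none => []
  | some i => gammaAux B i i

/-- Fuel-based computation of the typing-context Γ of the line at index `i`. -/
def ctxAux (B : Book) : ℕ → ℕ → List (ℕ × ℕ)
  | 0, i =>
    match B[i]? with
    | none => []
    | some l => [(l.identifier, l.category)]
  | fuel+1, i =>
    match B[i]? with
    | none => []
    | some l =>
      match l.indicator with
      | none => [(l.identifier, l.category)]
      | some y =>
        match introIdx B y with
        | none => [(l.identifier, l.category)]
        | some j => ctxAux B fuel j ++ [(l.identifier, l.category)]

/-- Typing-context Γ_z of variable `z`. Γ_ε = ∅. -/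
def ctxOf (B : Book) (z : ℕ) : List (ℕ × ℕ) :=
  match introIdx B z with
  | none => []
  | some i => ctxAux B i i

/-- Subject-list of an indicator (γ_ε = [] for the empty indicator). -/
def gammaInd (B : Book) : Option ℕ → List ℕ
  | none => []
  | some y => gammaOf B y

/-- Typing-context of an indicator. -/
def ctxInd (B : Book) : Option ℕ → List (ℕ × ℕ)
  | none => []
  | some y => ctxOf B y

/-- y ≺ z : some line of `B` has indicator `y` (≠ ε) and identifier `z`. -/
def Prec (B : Book) (y z : ℕ) : Prop :=
  ∃ L ∈ B, L.indicator = some y ∧ L.identifier = z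

/-- The line at index `i` is a dead-end assumption line. -/
def DeadEnd (B : Book) (i : ℕ) : Prop :=
  ∃ L : Line, B[i]? = some L ∧ L.isAssum ∧
    ∀ j : ℕ, i < j → ∀ L' : Line, B[j]? = some L' → L'.indicator ≠ some L.identifier

/-- One removal step: delete a single dead-end assumption line. -/
def Step (B B' : Book) : Prop := ∃ i : ℕ, DeadEnd B i ∧ B' = B.eraseIdx i

/-- A clean book: coherent with no dead-end assumption lines. -/
def IsClean (B : Book) : Prop := Coherent B ∧ ∀ i : ℕ, ¬ DeadEnd B i

/-- An entry of the λD-environment Δ_B. -/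
structure Entry where
  ctx : List (ℕ × ℕ)
  const : ℕ
  args : List ℕ
  content : Content
  category : ℕ

def Fresh (B : Book) (x : ℕ) : Prop := ∀ L ∈ B, L.identifier ≠ x

def IndOk (B : Book) : Option ℕ → Prop
  | none => True
  | some z => ∃ L ∈ B, L.identifier = z ∧ L.isAssum

/-- Well-formed (ok) books with their translation Δ_B, relative to abstract
typing judgements `J Δ Γ M A` (Δ; Γ ⊢ M : A) and `S Δ Γ A` (Δ; Γ ⊢ A : s). -/
inductive Ok (J : List Entry → List (ℕ × ℕ) → ℕ → ℕ → Prop)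
    (S : List Entry → List (ℕ × ℕ) → ℕ → Prop) : Book → List Entry → Prop
  | nil : Ok J S [] []
  | assum {B : Book} {Δ : List Entry} {ind : Option ℕ} {x A : ℕ} :
      Ok J S B Δ → Fresh B x → IndOk B ind → S Δ (ctxInd B ind) A →
      Ok J S (B ++ [⟨ind, x, Content.dash, A⟩]) Δ
  | defin {B : Book} {Δ : List Entry} {ind : Option ℕ} {c M A : ℕ} :
      Ok J S B Δ → Fresh B c → IndOk B ind → J Δ (ctxInd B ind) M A →
      Ok J S (B ++ [⟨ind, c, Content.term M, A⟩])
        (Δ ++ [⟨ctxInd B ind, c, gammaInd B ind, Content.term M, A⟩])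
  | prim {B : Book} {Δ : List Entry} {ind : Option ℕ} {c A : ℕ} :
      Ok J S B Δ → Fresh B c → IndOk B ind → S Δ (ctxInd B ind) A →
      Ok J S (B ++ [⟨ind, c, Content.pn, A⟩])
        (Δ ++ [⟨ctxInd B ind, c, gammaInd B ind, Content.pn, A⟩])

/-- A λD-environment definition: context, constant, content (term or PN), type. -/
structure Defn where
  ctx : List (ℕ × ℕ)
  const : ℕ
  content : Content
  category : ℕ

/-- The chain of assumption lines for a context, with indicators ε, x₁, x₂, …. -/
def clusterAssums : Option ℕ → List (ℕ × ℕ) → List Line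
  | _, [] => []
  | prev, (x, A) :: rest => ⟨prev, x, Content.dash, A⟩ :: clusterAssums (some x) rest

/-- The last variable of a context (the indicator of the final line). -/
def lastVar (ctx : List (ℕ × ℕ)) : Option ℕ := (ctx.map Prod.fst).getLast?

/-- The cluster of Automath lines corresponding to one λD-definition. -/
def cluster (d : Defn) : List Line :=
  clusterAssums none d.ctx ++ [⟨lastVar d.ctx, d.const, d.content, d.category⟩]

/-- The translation of a λD-environment to an Automath book B_Δ. -/
def transEnv (Δ : List Defn) : Book := (Δ.map cluster).flatten

def AssumsIndicateSucc (B : Book) : Prop :=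
  ∀ i L, B[i]? = some L → L.isAssum →
    ∃ L', B[i + 1]? = some L' ∧ L'.indicator = some L.identifier

namespace AssumsIndicateSucc

theorem not_deadEnd {B : Book} (hB : AssumsIndicateSucc B) (i : ℕ) : ¬ DeadEnd B i := by
  rintro ⟨L, hL, hassum, hnext⟩
  obtain ⟨L', hL', hind⟩ := hB i L hL hassum
  exact hnext (i + 1) i.lt_succ_self L' hL' hind

theorem singleton {F : Line} (hF : ¬ F.isAssum) : AssumsIndicateSucc [F] := by
  rintro (_ | i) L hL hassum
  · cases hL
    exact absurd hassum hF
  · simp at hL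

theorem cons {L : Line} {B : Book} (hB : AssumsIndicateSucc B)
    (hL : L.isAssum → ∃ L' ∈ B.head?, L'.indicator = some L.identifier) :
    AssumsIndicateSucc (L :: B) := by
  rintro (_ | i) L₀ hL₀ hassum
  · cases hL₀
    obtain ⟨L', hL', hind⟩ := hL hassum
    exact ⟨L', by simpa [List.head?_eq_getElem?] using hL', hind⟩
  · exact hB i L₀ hL₀ hassum

/-- The property forces the last line of `A` not to be an assumption, so no assumption line of
`A` needs the first line of `B`. -/
theorem append {A B : Book} (hA : AssumsIndicateSucc A) (hB : AssumsIndicateSucc B) :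
    AssumsIndicateSucc (A ++ B) := by
  intro i L hL hassum
  rcases lt_or_ge i A.length with hi | hi
  · rw [List.getElem?_append_left hi] at hL
    obtain ⟨L', hL', hind⟩ := hA i L hL hassum
    have hi' : i + 1 < A.length := (List.getElem?_eq_some_iff.mp hL').1
    exact ⟨L', by rwa [List.getElem?_append_left hi'], hind⟩
  · rw [List.getElem?_append_right hi] at hL
    obtain ⟨L', hL', hind⟩ := hB _ L hL hassum
    refine ⟨L', ?_, hind⟩
    rwa [List.getElem?_append_right (by omega), Nat.sub_add_comm hi]

theorem flatten {Bs : List Book} (hBs : ∀ B ∈ Bs, AssumsIndicateSucc B) :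
    AssumsIndicateSucc Bs.flatten := by
  induction Bs with
  | nil => intro i L hL; simp at hL
  | cons B Bs ih =>
    rw [List.flatten_cons]
    exact (hBs B (by simp)).append (ih fun B' hB' => hBs B' (by simp [hB']))

end AssumsIndicateSucc

theorem assumsIndicateSucc_clusterAssums_append (ctx : List (ℕ × ℕ)) (prev : Option ℕ)
    {F : Line} (hF : ¬ F.isAssum) (hind : ∀ x ∈ lastVar ctx, F.indicator = some x) :
    AssumsIndicateSucc (clusterAssums prev ctx ++ [F]) := by
  induction ctx generalizing prev with
  | nil => exact .singleton hF
  | cons p rest ih =>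
    obtain ⟨x, A⟩ := p
    have hlast : lastVar ((x, A) :: rest) = some ((lastVar rest).getD x) := by
      simp [lastVar, List.getLast?_cons]
    rw [hlast] at hind
    refine .cons (ih (some x) fun y hy => by simpa [Option.mem_def.mp hy] using hind) fun _ => ?_
    cases rest with
    | nil => simpa [clusterAssums, lastVar] using hind
    | cons q r => simp [clusterAssums]

theorem assumsIndicateSucc_cluster {d : Defn} (hd : d.content ≠ Content.dash) :
    AssumsIndicateSucc (cluster d) :=
  assumsIndicateSucc_clusterAssums_append d.ctx none (by simpa [Line.isAssum] using hd)
    fun _ hx => by rw [← hx]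

theorem stmt13_general (Δ : List Defn)
    (hdp : ∀ d ∈ Δ, d.content ≠ Content.dash) :
    ∀ i : ℕ, ¬ DeadEnd (transEnv Δ) i := by
  have hclusters : ∀ B ∈ Δ.map cluster, AssumsIndicateSucc B := by
    simp only [List.mem_map]
    rintro _ ⟨d, hd, rfl⟩
    exact assumsIndicateSucc_cluster (hdp d hd)
  exact (AssumsIndicateSucc.flatten hclusters).not_deadEnd

/-- the book B_Δ obtained by translating a λD-environment is clean:
no assumption line of B_Δ is a dead-end. -/
theorem stmt13 (Δ : List Defn)
    (hfresh : ((transEnv Δ).map Line.identifier).Nodup)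
    (hdp : ∀ d ∈ Δ, d.content ≠ Content.dash) :
    ∀ i : ℕ, ¬ DeadEnd (transEnv Δ) i :=
  stmt13_general Δ hdp
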